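/- The logic LTL_{Past,m} is decidable: membership of a formula in LTL_{Past,m} is a decidable (computable) predicate on the countable set of formulas. -/
import Mathlib


/-- Formulas of the language of `LTL_{Past,m}`: atoms, negation, conjunction,
`N` (next) and `S` (since). -/
inductive Formula : Type
  | atom : ℕ → Formula
  | neg : Formula → Formula
  | conj : Formula → Formula → Formula
  | next : Formula → Formula
  | since : Formula → Formula → Formula
deriving DecidableEq

namespace Formula

/-- Implication, defined as usual from `¬` and `∧`. -/
def imp (φ ψ : Formula) : Formula := .neg (.conj φ (.neg ψ))

/-- Disjunction, defined as usual from `¬` and `∧`. -/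
def disj (φ ψ : Formula) : Formula := .neg (.conj (.neg φ) (.neg ψ))

/-- The constant true formula `⊤`, defined as usual. -/
def top : Formula := imp (.atom 0) (.atom 0)

/-- `□φ` abbreviates `¬(⊤ S ¬φ)`. -/
def box (φ : Formula) : Formula := .neg (.since top (.neg φ))

end Formula

/-- Truth of a formula at a state `a : ℕ` in a model given by a valuation
`V : ℕ → Set ℕ`, in the bounded (measure of intransitivity `m`) semantics. -/
def Sat (m : ℕ) (V : ℕ → Set ℕ) : Formula → ℕ → Prop
  | .atom i, a => a ∈ V i
  | .neg φ, a => ¬ Sat m V φ a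
  | .conj φ ψ, a => Sat m V φ a ∧ Sat m V ψ a
  | .next φ, a => Sat m V φ (a + 1)
  | .since φ ψ, a =>
      ∃ b, a ≤ b ∧ b ≤ a + m ∧ Sat m V ψ b ∧ ∀ c, a ≤ c → c < b → Sat m V φ c

/-- A formula is valid in a model `V` if it is true at every state. -/
def ValidIn (m : ℕ) (V : ℕ → Set ℕ) (φ : Formula) : Prop := ∀ a : ℕ, Sat m V φ a

/-- The logic `LTL_{Past,m}`: the set of formulas valid in every model. -/
def Logic (m : ℕ) : Set Formula := { φ | ∀ V : ℕ → Set ℕ, ValidIn m V φ }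

/-- Truth at a state in the unbounded (transitive) semantics of `LTL`. -/
def SatU (V : ℕ → Set ℕ) : Formula → ℕ → Prop
  | .atom i, a => a ∈ V i
  | .neg φ, a => ¬ SatU V φ a
  | .conj φ ψ, a => SatU V φ a ∧ SatU V ψ a
  | .next φ, a => SatU V φ (a + 1)
  | .since φ ψ, a =>
      ∃ b, a ≤ b ∧ SatU V ψ b ∧ ∀ c, a ≤ c → c < b → SatU V φ c

/-- The transitive logic `LTL`: formulas true at every state of every model in
the unbounded semantics. -/
def LogicU : Set Formula := { φ | ∀ (V : ℕ → Set ℕ) (a : ℕ), SatU V φ a }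

/-- Truth at a state in the non-uniformly non-transitive semantics, where the
reach of `S` at state `a` is bounded by `f a` for a bound function `f`. -/
def SatB (f : ℕ → ℕ) (V : ℕ → Set ℕ) : Formula → ℕ → Prop
  | .atom i, a => a ∈ V i
  | .neg φ, a => ¬ SatB f V φ a
  | .conj φ ψ, a => SatB f V φ a ∧ SatB f V ψ a
  | .next φ, a => SatB f V φ (a + 1)
  | .since φ ψ, a =>
      ∃ b, a ≤ b ∧ b ≤ f a ∧ SatB f V ψ b ∧ ∀ c, a ≤ c → c < b → SatB f V φ c

/-- The non-uniformly non-transitive logic `LTL_{Past}`: formulas true at every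
state of every model over every bound function. -/
def LogicPast : Set Formula :=
  { φ | ∀ f : ℕ → ℕ, (∀ i, i < f i) → (∀ i, f i < f (i + 1)) →
      ∀ (V : ℕ → Set ℕ) (a : ℕ), SatB f V φ a }

/-- Substitutions map atoms to formulas and extend homomorphically. -/
def substF (σ : ℕ → Formula) : Formula → Formula
  | .atom i => σ i
  | .neg φ => .neg (substF σ φ)
  | .conj φ ψ => .conj (substF σ φ) (substF σ ψ)
  | .next φ => .next (substF σ φ)
  | .since φ ψ => .since (substF σ φ) (substF σ ψ)

/-- An inference rule: a finite list of premises and a conclusion. -/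
structure Rule : Type where
  premises : List Formula
  conclusion : Formula
deriving DecidableEq

/-- A rule is valid in a model `V` if validity of all premises in `V` implies
validity of the conclusion in `V`. -/
def RuleValid (m : ℕ) (V : ℕ → Set ℕ) (r : Rule) : Prop :=
  (∀ φ ∈ r.premises, ValidIn m V φ) → ValidIn m V r.conclusion

/-- A rule is admissible in `LTL_{Past,m}` if every substitution making all
premises theorems also makes the conclusion a theorem. -/
def Admissible (m : ℕ) (r : Rule) : Prop :=
  ∀ σ : ℕ → Formula,
    (∀ φ ∈ r.premises, substF σ φ ∈ Logic m) → substF σ r.conclusion ∈ Logic m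

/-- Admissibility in the transitive logic `LTL`. -/
def AdmissibleU (r : Rule) : Prop :=
  ∀ σ : ℕ → Formula,
    (∀ φ ∈ r.premises, substF σ φ ∈ LogicU) → substF σ r.conclusion ∈ LogicU

/-- The number of symbols in a formula. -/
def sizeF : Formula → ℕ
  | .atom _ => 1
  | .neg φ => sizeF φ + 1
  | .conj φ ψ => sizeF φ + sizeF ψ + 1
  | .next φ => sizeF φ + 1
  | .since φ ψ => sizeF φ + sizeF ψ + 1

/-- The number of symbols in a rule. -/
def ruleSize (r : Rule) : ℕ :=
  (r.premises.map sizeF).sum + sizeF r.conclusion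

/-- An (injective) numerical encoding of formulas. -/
def encF : Formula → ℕ
  | .atom i => 5 * i
  | .neg φ => 5 * encF φ + 1
  | .conj φ ψ => 5 * Nat.pair (encF φ) (encF ψ) + 2
  | .next φ => 5 * encF φ + 3
  | .since φ ψ => 5 * Nat.pair (encF φ) (encF ψ) + 4

/-- An (injective) numerical encoding of rules. -/
def encR (r : Rule) : ℕ :=
  Nat.pair (Encodable.encode (r.premises.map encF)) (encF r.conclusion)

/-- `lit true φ = φ` and `lit false φ = ¬φ`. -/
def lit (t : Bool) (φ : Formula) : Formula := if t then φ else .neg φ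

/-- Conjunction of a list of formulas. -/
def bigConj : List Formula → Formula
  | [] => Formula.top
  | [φ] => φ
  | φ :: ψ :: rest => .conj φ (bigConj (ψ :: rest))

/-- Disjunction of a list of formulas. -/
def bigDisj : List Formula → Formula
  | [] => .neg Formula.top
  | [φ] => φ
  | φ :: ψ :: rest => Formula.disj φ (bigDisj (ψ :: rest))

/-- A single disjunct of a reduced normal form over variables `x_1,…,x_n`
(the atoms `0,…,n-1`): for each `i` a literal over `x_i`, for each `i` a
literal over `N x_i`, and for each pair `i ≠ k` a literal over `x_i S x_k`. -/
def disjunct (n : ℕ) (t0 t1 : Fin n → Bool) (t2 : Fin n → Fin n → Bool) : Formula :=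
  bigConj
    (((List.finRange n).map fun i => lit (t0 i) (.atom i)) ++
     ((List.finRange n).map fun i => lit (t1 i) (.next (.atom i))) ++
     ((List.finRange n).flatMap fun i =>
        ((List.finRange n).filter fun k => k != i).map fun k =>
          lit (t2 i k) (.since (.atom i) (.atom k))))

/-- A rule is in reduced normal form if it has the shape `ε / x_1`, where `ε`
is a disjunction of disjuncts as above. -/
def IsRNF (r : Rule) : Prop :=
  ∃ n : ℕ, 0 < n ∧
    ∃ ds : List ((Fin n → Bool) × (Fin n → Bool) × (Fin n → Fin n → Bool)),
      ds ≠ [] ∧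
      r.premises = [bigDisj (ds.map fun d => disjunct n d.1 d.2.1 d.2.2)] ∧
      r.conclusion = .atom 0

/-- Boolean formulas built from argument places `p_1,…,p_n, q_1,…,q_k` using
only the Boolean connectives `¬` and `∧`. -/
inductive BForm (n k : ℕ) : Type
  | pvar : Fin n → BForm n k
  | qvar : Fin k → BForm n k
  | neg : BForm n k → BForm n k
  | conj : BForm n k → BForm n k → BForm n k

/-- Substitute formulas for the argument places of a Boolean formula. -/
def BForm.substB {n k : ℕ} (α : Fin n → Formula) (δ : Fin k → Formula) :
    BForm n k → Formula
  | .pvar i => α i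
  | .qvar j => δ j
  | .neg φ => Formula.neg (BForm.substB α δ φ)
  | .conj φ ψ => Formula.conj (BForm.substB α δ φ) (BForm.substB α δ ψ)

namespace LTLDec

/-- Modal depth scaled by `m`. -/
def dF (m : ℕ) : Formula → ℕ
  | .atom _ => 0
  | .neg φ => dF m φ
  | .conj φ ψ => max (dF m φ) (dF m ψ)
  | .next φ => dF m φ + 1
  | .since φ ψ => m + max (dF m φ) (dF m ψ)

/-- Bound on atom indices. -/
def aF : Formula → ℕ
  | .atom i => i + 1
  | .neg φ => aF φ
  | .conj φ ψ => max (aF φ) (aF ψ)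
  | .next φ => aF φ
  | .since φ ψ => max (aF φ) (aF ψ)

lemma sat_shift (m t : ℕ) : ∀ (φ : Formula) (V : ℕ → Set ℕ) (a : ℕ),
    Sat m V φ (t + a) ↔ Sat m (fun i => {x | t + x ∈ V i}) φ a := by
  intro φ
  induction φ with
  | atom i => intro V a; simp [Sat, Set.mem_setOf_eq]
  | neg φ ih => intro V a; simp [Sat, ih]
  | conj φ ψ ih1 ih2 => intro V a; simp [Sat, ih1, ih2]
  | next φ ih =>
      intro V a
      have : t + a + 1 = t + (a + 1) := by omega
      simp [Sat, this, ih]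
  | since φ ψ ih1 ih2 =>
      intro V a
      simp only [Sat]
      constructor
      · rintro ⟨b, hb1, hb2, hψ, hφ⟩
        refine ⟨b - t, by omega, by omega, ?_, ?_⟩
        · have : t + (b - t) = b := by omega
          rw [← ih2]; rwa [this]
        · intro c hc1 hc2
          have := hφ (t + c) (by omega) (by omega)
          rwa [ih1] at this
      · rintro ⟨b, hb1, hb2, hψ, hφ⟩
        refine ⟨t + b, by omega, by omega, by rwa [ih2], ?_⟩
        intro c hc1 hc2
        have h3 := (ih1 V (c - t)).mpr (hφ (c - t) (by omega) (by omega))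
        have hct : t + (c - t) = c := by omega
        rwa [hct] at h3

lemma sat_congr (m : ℕ) : ∀ (φ : Formula) (V W : ℕ → Set ℕ) (a : ℕ),
    (∀ i < aF φ, ∀ x, a ≤ x → x ≤ a + dF m φ → (x ∈ V i ↔ x ∈ W i)) →
    (Sat m V φ a ↔ Sat m W φ a) := by
  intro φ
  induction φ with
  | atom i =>
      intro V W a h
      simpa [Sat] using h i (by simp [aF]) a le_rfl (by simp [dF])
  | neg φ ih =>
      intro V W a h
      simp only [Sat]
      rw [ih V W a (fun i hi x hx1 hx2 => h i hi x hx1 hx2)]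
  | conj φ ψ ih1 ih2 =>
      intro V W a h
      simp only [Sat]
      rw [ih1 V W a fun i hi x hx1 hx2 =>
            h i (lt_of_lt_of_le hi (le_max_left _ _)) x hx1
              (le_trans hx2 (by simp [dF])),
          ih2 V W a fun i hi x hx1 hx2 =>
            h i (lt_of_lt_of_le hi (le_max_right _ _)) x hx1
              (le_trans hx2 (by simp [dF]))]
  | next φ ih =>
      intro V W a h
      simp only [Sat]
      rw [ih V W (a + 1) fun i hi x hx1 hx2 =>
            h i hi x (by omega) (by simp only [dF]; omega)]
  | since φ ψ ih1 ih2 =>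
      intro V W a h
      simp only [Sat]
      have hφ : ∀ c, a ≤ c → c ≤ a + m → (Sat m V φ c ↔ Sat m W φ c) := by
        intro c hc1 hc2
        refine ih1 V W c fun i hi x hx1 hx2 => ?_
        exact h i (lt_of_lt_of_le hi (le_max_left _ _)) x (by omega)
          (by simp only [dF]; have := le_max_left (dF m φ) (dF m ψ); omega)
      have hψ : ∀ b, a ≤ b → b ≤ a + m → (Sat m V ψ b ↔ Sat m W ψ b) := by
        intro b hb1 hb2
        refine ih2 V W b fun i hi x hx1 hx2 => ?_
        exact h i (lt_of_lt_of_le hi (le_max_right _ _)) x (by omega)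
          (by simp only [dF]; have := le_max_right (dF m φ) (dF m ψ); omega)
      constructor
      · rintro ⟨b, hb1, hb2, h2, h1⟩
        exact ⟨b, hb1, hb2, (hψ b hb1 hb2).mp h2,
          fun c hc1 hc2 => (hφ c hc1 (by omega)).mp (h1 c hc1 hc2)⟩
      · rintro ⟨b, hb1, hb2, h2, h1⟩
        exact ⟨b, hb1, hb2, (hψ b hb1 hb2).mpr h2,
          fun c hc1 hc2 => (hφ c hc1 (by omega)).mpr (h1 c hc1 hc2)⟩

end LTLDec

namespace LTLDec

/-- Bit test via division, primrec-friendly. -/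
def bitB (k t : ℕ) : Bool := k / 2 ^ t % 2 == 1

lemma bitB_eq_testBit (k t : ℕ) : bitB k t = Nat.testBit k t := by
  rw [Nat.testBit_eq_decide_div_mod_eq]
  unfold bitB
  rw [Bool.eq_iff_iff]
  simp

/-- The valuation encoded by the bits of `k`. -/
def Vk (k : ℕ) : ℕ → Set ℕ := fun i => {x | Nat.testBit k (Nat.pair i x) = true}

def allSeg (l1 : List Bool) (a : ℕ) : ℕ → Bool
  | 0 => true
  | j + 1 => allSeg l1 a j && l1.getD (a + j) false

def sinceAux (l1 l2 : List Bool) (a : ℕ) : ℕ → Bool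
  | 0 => false
  | j + 1 => sinceAux l1 l2 a j || (l2.getD (a + j) false && allSeg l1 a j)

lemma allSeg_iff (l1 : List Bool) (a j : ℕ) :
    allSeg l1 a j = true ↔ ∀ c < j, l1.getD (a + c) false = true := by
  induction j with
  | zero => simp [allSeg]
  | succ j ih =>
      simp only [allSeg, Bool.and_eq_true, ih]
      constructor
      · rintro ⟨h1, h2⟩ c hc
        rcases Nat.lt_succ_iff_lt_or_eq.mp hc with h | rfl
        · exact h1 c h
        · exact h2
      · intro h
        exact ⟨fun c hc => h c (Nat.lt_succ_of_lt hc), h j (Nat.lt_succ_self j)⟩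

lemma sinceAux_iff (l1 l2 : List Bool) (a t : ℕ) :
    sinceAux l1 l2 a t = true ↔
      ∃ j < t, l2.getD (a + j) false = true ∧ ∀ c < j, l1.getD (a + c) false = true := by
  induction t with
  | zero => simp [sinceAux]
  | succ t ih =>
      simp only [sinceAux, Bool.or_eq_true, Bool.and_eq_true, ih, allSeg_iff]
      constructor
      · rintro (⟨j, hj, h⟩ | h)
        · exact ⟨j, Nat.lt_succ_of_lt hj, h⟩
        · exact ⟨t, Nat.lt_succ_self t, h⟩
      · rintro ⟨j, hj, h⟩
        rcases Nat.lt_succ_iff_lt_or_eq.mp hj with h' | rfl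
        · exact Or.inl ⟨j, h', h⟩
        · exact Or.inr h

/-- Evaluator body: value at state `a`, given evaluations `l1`, `l2` of the
immediate subformulas (here `mm` is the measure and `n` the code). -/
def evBody (mm k n : ℕ) (l1 l2 : List Bool) (a : ℕ) : Bool :=
  if n % 5 = 0 then bitB k (Nat.pair (n / 5) a)
  else if n % 5 = 1 then !(l1.getD a false)
  else if n % 5 = 2 then l1.getD a false && l2.getD a false
  else if n % 5 = 3 then l1.getD (a + 1) false
  else sinceAux l1 l2 a (mm + 1)

def sub1 (n : ℕ) : ℕ :=
  if n % 5 = 2 ∨ n % 5 = 4 then (Nat.unpair (n / 5)).1 else n / 5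

def sub2 (n : ℕ) : ℕ :=
  if n % 5 = 2 ∨ n % 5 = 4 then (Nat.unpair (n / 5)).2 else n / 5

lemma sub1_lt {n : ℕ} (h : n % 5 ≠ 0) : sub1 n < n := by
  have hn : 1 ≤ n := by omega
  have h5 : n / 5 < n := Nat.div_lt_self (by omega) (by norm_num)
  unfold sub1
  split
  · exact lt_of_le_of_lt (Nat.unpair_left_le _) h5
  · exact h5

lemma sub2_lt {n : ℕ} (h : n % 5 ≠ 0) : sub2 n < n := by
  have h5 : n / 5 < n := Nat.div_lt_self (by omega) (by norm_num)
  unfold sub2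
  split
  · exact lt_of_le_of_lt (Nat.unpair_right_le _) h5
  · exact h5

/-- List of truth values of the formula coded by `n` at states `0,…,L-1`,
in the model coded by `k`, where `p = (mm, k, L)`. -/
def ev (p : ℕ × ℕ × ℕ) (n : ℕ) : List Bool :=
  if h : n % 5 = 0 then
    (List.range p.2.2).map (evBody p.1 p.2.1 n [] [])
  else
    (List.range p.2.2).map (evBody p.1 p.2.1 n (ev p (sub1 n)) (ev p (sub2 n)))
termination_by n
decreasing_by
  · exact sub1_lt h
  · exact sub2_lt h

lemma getD_map_range {α : Type*} (L : ℕ) (f : ℕ → α) (d : α) {a : ℕ} (h : a < L) :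
    (((List.range L).map f).getD a d) = f a := by
  rw [List.getD_eq_getElem?_getD]
  simp [List.getElem?_map, List.getElem?_range h]

end LTLDec

namespace LTLDec

lemma ev_correct (mm k L : ℕ) : ∀ (φ : Formula) (a : ℕ), a + dF mm φ < L →
    ((ev (mm, k, L) (encF φ)).getD a false = true ↔ Sat mm (Vk k) φ a) := by
  intro φ
  induction φ with
  | atom i =>
      intro a ha
      have ha' : a < L := by simpa [dF] using ha
      have hmod : encF (.atom i) % 5 = 0 := by simp only [encF]; omega
      rw [ev, dif_pos hmod, getD_map_range _ _ _ ha']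
      have hdiv : encF (.atom i) / 5 = i := by simp only [encF]; omega
      simp only [evBody, if_pos hmod, hdiv, bitB_eq_testBit]
      simp [Sat, Vk]
  | neg φ ih =>
      intro a ha
      have ha' : a < L := by omega
      set n := encF (.neg φ) with hn
      have hmod : n % 5 = 1 := by simp only [hn, encF]; omega
      have hdiv : n / 5 = encF φ := by simp only [hn, encF]; omega
      have hs1 : sub1 n = encF φ := by rw [sub1, if_neg (by omega), hdiv]
      rw [ev, dif_neg (by omega), getD_map_range _ _ _ ha']
      rw [evBody, if_neg (by omega), if_pos hmod, hs1]
      have := ih a (by simpa [dF] using ha)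
      simp only [Sat, Bool.not_eq_true', ← this]
      cases hb : (ev (mm, k, L) (encF φ)).getD a false <;> simp [hb]
  | conj φ ψ ih1 ih2 =>
      intro a ha
      have ha' : a < L := by omega
      set n := encF (.conj φ ψ) with hn
      have hP : n = 5 * Nat.pair (encF φ) (encF ψ) + 2 := by simp [hn, encF]
      have hmod : n % 5 = 2 := by omega
      have hdiv : n / 5 = Nat.pair (encF φ) (encF ψ) := by omega
      have hs1 : sub1 n = encF φ := by
        rw [sub1, if_pos (by omega), hdiv, Nat.unpair_pair]
      have hs2 : sub2 n = encF ψ := by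
        rw [sub2, if_pos (by omega), hdiv, Nat.unpair_pair]
      rw [ev, dif_neg (by omega), getD_map_range _ _ _ ha']
      rw [evBody, if_neg (by omega), if_neg (by omega), if_pos hmod, hs1, hs2]
      have hd : max (dF mm φ) (dF mm ψ) = dF mm (.conj φ ψ) := rfl
      have h1 := ih1 a (by have := le_max_left (dF mm φ) (dF mm ψ); omega)
      have h2 := ih2 a (by have := le_max_right (dF mm φ) (dF mm ψ); omega)
      simp only [Sat, Bool.and_eq_true, h1, h2]
  | next φ ih =>
      intro a ha
      have ha' : a < L := by omega
      set n := encF (.next φ) with hn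
      have hP : n = 5 * encF φ + 3 := by simp [hn, encF]
      have hmod : n % 5 = 3 := by omega
      have hs1 : sub1 n = encF φ := by rw [sub1, if_neg (by omega)]; omega
      rw [ev, dif_neg (by omega), getD_map_range _ _ _ ha']
      rw [evBody, if_neg (by omega), if_neg (by omega), if_neg (by omega), if_pos hmod, hs1]
      have h1 := ih (a + 1) (by simp only [dF] at ha; omega)
      simpa [Sat] using h1
  | since φ ψ ih1 ih2 =>
      intro a ha
      have ha' : a < L := by omega
      set n := encF (.since φ ψ) with hn
      have hP : n = 5 * Nat.pair (encF φ) (encF ψ) + 4 := by simp [hn, encF]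
      have hmod : n % 5 = 4 := by omega
      have hdiv : n / 5 = Nat.pair (encF φ) (encF ψ) := by omega
      have hs1 : sub1 n = encF φ := by
        rw [sub1, if_pos (by omega), hdiv, Nat.unpair_pair]
      have hs2 : sub2 n = encF ψ := by
        rw [sub2, if_pos (by omega), hdiv, Nat.unpair_pair]
      rw [ev, dif_neg (by omega), getD_map_range _ _ _ ha']
      rw [evBody, if_neg (by omega), if_neg (by omega), if_neg (by omega), if_neg (by omega),
        hs1, hs2]
      have hdφ : dF mm φ ≤ dF mm (.since φ ψ) - mm := by
        simp only [dF]; have := le_max_left (dF mm φ) (dF mm ψ); omega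
      have hdψ : dF mm ψ ≤ dF mm (.since φ ψ) - mm := by
        simp only [dF]; have := le_max_right (dF mm φ) (dF mm ψ); omega
      have hm : mm ≤ dF mm (.since φ ψ) := by simp [dF]
      rw [sinceAux_iff]
      simp only [Sat]
      constructor
      · rintro ⟨j, hj, h2, h1⟩
        refine ⟨a + j, by omega, by omega, ?_, ?_⟩
        · exact (ih2 (a + j) (by omega)).mp h2
        · intro c hc1 hc2
          have := h1 (c - a) (by omega)
          rw [show a + (c - a) = c by omega] at this
          exact (ih1 c (by omega)).mp this
      · rintro ⟨b, hb1, hb2, h2, h1⟩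
        refine ⟨b - a, by omega, ?_, ?_⟩
        · rw [show a + (b - a) = b by omega]
          exact (ih2 b (by omega)).mpr h2
        · intro c hc
          exact (ih1 (a + c) (by omega)).mpr (h1 (a + c) (by omega) (by omega))

end LTLDec

namespace LTLDec

lemma dF_le (mm : ℕ) : ∀ φ : Formula, dF mm φ ≤ (mm + 1) * (encF φ + 1) := by
  intro φ
  induction φ with
  | atom i => simp [dF]
  | neg φ ih =>
      have : encF φ ≤ encF (.neg φ) := by simp only [encF]; omega
      calc dF mm (.neg φ) = dF mm φ := rfl
        _ ≤ (mm + 1) * (encF φ + 1) := ih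
        _ ≤ (mm + 1) * (encF (.neg φ) + 1) := by
            exact Nat.mul_le_mul_left _ (by omega)
  | conj φ ψ ih1 ih2 =>
      have h1 : encF φ ≤ Nat.pair (encF φ) (encF ψ) := Nat.left_le_pair _ _
      have h2 : encF ψ ≤ Nat.pair (encF φ) (encF ψ) := Nat.right_le_pair _ _
      have he : encF (.conj φ ψ) = 5 * Nat.pair (encF φ) (encF ψ) + 2 := rfl
      simp only [dF, max_le_iff]
      constructor
      · exact le_trans ih1 (Nat.mul_le_mul_left _ (by omega))
      · exact le_trans ih2 (Nat.mul_le_mul_left _ (by omega))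
  | next φ ih =>
      have he : encF (.next φ) = 5 * encF φ + 3 := rfl
      simp only [dF, he]
      have : (mm + 1) * (encF φ + 1) + (mm + 1) ≤ (mm + 1) * (5 * encF φ + 3 + 1) := by
        rw [← Nat.mul_succ]
        exact Nat.mul_le_mul_left _ (by omega)
      omega
  | since φ ψ ih1 ih2 =>
      have h1 : encF φ ≤ Nat.pair (encF φ) (encF ψ) := Nat.left_le_pair _ _
      have h2 : encF ψ ≤ Nat.pair (encF φ) (encF ψ) := Nat.right_le_pair _ _
      have he : encF (.since φ ψ) = 5 * Nat.pair (encF φ) (encF ψ) + 4 := rfl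
      simp only [dF, he]
      have hb : max (dF mm φ) (dF mm ψ) ≤ (mm + 1) * (Nat.pair (encF φ) (encF ψ) + 1) := by
        apply max_le
        · exact le_trans ih1 (Nat.mul_le_mul_left _ (by omega))
        · exact le_trans ih2 (Nat.mul_le_mul_left _ (by omega))
      have : (mm + 1) * (Nat.pair (encF φ) (encF ψ) + 1) + (mm + 1) ≤
          (mm + 1) * (5 * Nat.pair (encF φ) (encF ψ) + 4 + 1) := by
        rw [← Nat.mul_succ]
        exact Nat.mul_le_mul_left _ (by omega)
      omega

lemma aF_le : ∀ φ : Formula, aF φ ≤ encF φ + 1 := by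
  intro φ
  induction φ with
  | atom i => simp only [aF, encF]; omega
  | neg φ ih => simp only [aF, encF]; omega
  | conj φ ψ ih1 ih2 =>
      have h1 : encF φ ≤ Nat.pair (encF φ) (encF ψ) := Nat.left_le_pair _ _
      have h2 : encF ψ ≤ Nat.pair (encF φ) (encF ψ) := Nat.right_le_pair _ _
      simp only [aF, encF, max_le_iff]; omega
  | next φ ih => simp only [aF, encF]; omega
  | since φ ψ ih1 ih2 =>
      have h1 : encF φ ≤ Nat.pair (encF φ) (encF ψ) := Nat.left_le_pair _ _
      have h2 : encF ψ ≤ Nat.pair (encF φ) (encF ψ) := Nat.right_le_pair _ _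
      simp only [aF, encF, max_le_iff]; omega

lemma pair_lt_sq (i x : ℕ) : Nat.pair i x < (i + x + 1) ^ 2 := by
  rw [Nat.pair]
  split <;> nlinarith

/-- Window length. -/
def Lw (mm n : ℕ) : ℕ := (mm + 1) * (n + 1) + 1

/-- Number of relevant bits. -/
def Bw (mm n : ℕ) : ℕ := (n + Lw mm n + 1) ^ 2

lemma exists_code (Q : ℕ → Prop) : ∀ B : ℕ, ∃ k, k < 2 ^ B ∧
    ∀ t < B, (Nat.testBit k t = true ↔ Q t) := by
  intro B
  induction B with
  | zero => exact ⟨0, by norm_num, fun t ht => absurd ht (by omega)⟩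
  | succ B ih =>
      classical
      obtain ⟨k, hk, hbit⟩ := ih
      by_cases hQ : Q B
      · refine ⟨k ||| 2 ^ B, ?_, ?_⟩
        · have h1 : k < 2 ^ (B + 1) := lt_of_lt_of_le hk (Nat.pow_le_pow_right (by norm_num) (by omega))
          have h2 : 2 ^ B < 2 ^ (B + 1) := Nat.pow_lt_pow_right (by norm_num) (by omega)
          exact Nat.bitwise_lt_two_pow h1 h2
        · intro t ht
          rw [Nat.testBit_lor]
          rcases Nat.lt_succ_iff_lt_or_eq.mp ht with h | rfl
          · rw [Nat.testBit_two_pow_of_ne (by omega)]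
            simp [hbit t h]
          · rw [Nat.testBit_two_pow_self, Nat.testBit_lt_two_pow hk]
            simp [hQ]
      · refine ⟨k, lt_of_lt_of_le hk (Nat.pow_le_pow_right (by norm_num) (by omega)), ?_⟩
        intro t ht
        rcases Nat.lt_succ_iff_lt_or_eq.mp ht with h | rfl
        · exact hbit t h
        · rw [Nat.testBit_lt_two_pow hk]
          simp [hQ]

lemma main_iff (m : ℕ) (φ : Formula) :
    φ ∈ Logic m ↔
      ∀ k < 2 ^ Bw m (encF φ),
        (ev (m, k, Lw m (encF φ)) (encF φ)).getD 0 false = true := by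
  have hdL : dF m φ < Lw m (encF φ) := by
    have := dF_le m φ; simp only [Lw]; omega
  constructor
  · intro h k _
    exact (ev_correct m k (Lw m (encF φ)) φ 0 (by omega)).mpr (h (Vk k) 0)
  · intro h V a
    set W : ℕ → Set ℕ := fun i => {x | a + x ∈ V i} with hW
    obtain ⟨k, hk, hbit⟩ := exists_code
      (fun t => (Nat.unpair t).2 ∈ W (Nat.unpair t).1) (Bw m (encF φ))
    have hsat : Sat m (Vk k) φ 0 :=
      (ev_correct m k (Lw m (encF φ)) φ 0 (by omega)).mp (h k hk)
    have hcong : Sat m (Vk k) φ 0 ↔ Sat m W φ 0 := by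
      apply sat_congr
      intro i hi x hx1 hx2
      have hiB : i ≤ encF φ := by have := aF_le φ; omega
      have hxB : x ≤ dF m φ := by omega
      have hpB : Nat.pair i x < Bw m (encF φ) := by
        have h1 := pair_lt_sq i x
        have h2 : (i + x + 1) ^ 2 ≤ (encF φ + Lw m (encF φ) + 1) ^ 2 :=
          Nat.pow_le_pow_left (by omega) 2
        simp only [Bw]; omega
      have := hbit (Nat.pair i x) hpB
      rw [Nat.unpair_pair] at this
      simp only [Vk, Set.mem_setOf_eq]
      exact this
    have := hcong.mp hsat
    have hshift := (sat_shift m a φ V 0)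
    rw [Nat.add_zero] at hshift
    exact hshift.mpr this

end LTLDec

namespace LTLDec

set_option maxHeartbeats 2000000

/-- The step function for `Primrec.nat_strong_rec`. -/
def evG (p : ℕ × ℕ × ℕ) (prev : List (List Bool)) : List Bool :=
  (List.range p.2.2).map
    (evBody p.1 p.2.1 prev.length (prev.getD (sub1 prev.length) [])
      (prev.getD (sub2 prev.length) []))

lemma evG_spec (p : ℕ × ℕ × ℕ) (n : ℕ) :
    evG p ((List.range n).map (ev p)) = ev p n := by
  unfold evG
  simp only [List.length_map, List.length_range]
  by_cases h : n % 5 = 0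
  · rw [ev, dif_pos h]
    apply List.map_congr_left
    intro a _
    simp only [evBody, if_pos h]
  · rw [ev, dif_neg h]
    rw [getD_map_range _ _ _ (sub1_lt h), getD_map_range _ _ _ (sub2_lt h)]

lemma allSeg_eq (l : List Bool) (x : ℕ) : ∀ j : ℕ,
    allSeg l x j = Nat.rec (motive := fun _ => Bool) true
      (fun j ih => ih && l.getD (x + j) false) j := by
  intro j
  induction j with
  | zero => rfl
  | succ j ih => simp only [allSeg, ih]

lemma allSeg_primrec : Primrec₂ fun (q : List Bool × ℕ) (j : ℕ) => allSeg q.1 q.2 j := by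
  have h : Primrec₂ fun (q : List Bool × ℕ) (p : ℕ × Bool) =>
      p.2 && q.1.getD (q.2 + p.1) false :=
    Primrec.and.comp₂ (Primrec.snd.comp₂ Primrec₂.right)
      ((Primrec.list_getD false).comp₂ (Primrec.fst.comp₂ Primrec₂.left)
        (Primrec.nat_add.comp₂ (Primrec.snd.comp₂ Primrec₂.left)
          (Primrec.fst.comp₂ Primrec₂.right)))
  exact (Primrec.nat_rec (Primrec.const true) h).of_eq fun q j => (allSeg_eq q.1 q.2 j).symm

lemma sinceAux_eq (l1 l2 : List Bool) (x : ℕ) : ∀ j : ℕ,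
    sinceAux l1 l2 x j = Nat.rec (motive := fun _ => Bool) false
      (fun j ih => ih || (l2.getD (x + j) false && allSeg l1 x j)) j := by
  intro j
  induction j with
  | zero => rfl
  | succ j ih => simp only [sinceAux, ih]

lemma sinceAux_primrec :
    Primrec₂ fun (q : (List Bool × List Bool) × ℕ) (j : ℕ) =>
      sinceAux q.1.1 q.1.2 q.2 j := by
  have h : Primrec₂ fun (q : (List Bool × List Bool) × ℕ) (p : ℕ × Bool) =>
      p.2 || (q.1.2.getD (q.2 + p.1) false && allSeg q.1.1 q.2 p.1) :=
    Primrec.or.comp₂ (Primrec.snd.comp₂ Primrec₂.right)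
      (Primrec.and.comp₂
        ((Primrec.list_getD false).comp₂
          (Primrec.snd.comp (Primrec.fst.comp Primrec.fst)).to₂
          (Primrec.nat_add.comp₂ (Primrec.snd.comp₂ Primrec₂.left)
            (Primrec.fst.comp₂ Primrec₂.right)))
        (allSeg_primrec.comp₂
          (Primrec₂.pair.comp₂
            (Primrec.fst.comp (Primrec.fst.comp Primrec.fst)).to₂
            (Primrec.snd.comp Primrec.fst).to₂)
          (Primrec.fst.comp₂ Primrec₂.right)))
  exact (Primrec.nat_rec (Primrec.const false) h).of_eq fun q j =>
    (sinceAux_eq q.1.1 q.1.2 q.2 j).symm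

lemma pow_primrec : Primrec₂ (fun a b : ℕ => a ^ b) :=
  Primrec₂.unpaired'.mp Nat.Primrec.pow

lemma bitB_primrec : Primrec₂ bitB :=
  Primrec.beq.comp₂
    (Primrec.nat_mod.comp₂
      (Primrec.nat_div.comp₂ Primrec₂.left
        (pow_primrec.comp₂ (Primrec₂.const 2) Primrec₂.right))
      (Primrec₂.const 2))
    (Primrec₂.const 1)

lemma mod5_pred (c : ℕ) : PrimrecPred fun n : ℕ => n % 5 = c :=
  Primrec.eq.comp (Primrec.nat_mod.comp Primrec.id (Primrec.const 5)) (Primrec.const c)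

lemma div5_primrec : Primrec fun n : ℕ => n / 5 :=
  Primrec.nat_div.comp Primrec.id (Primrec.const 5)

lemma sub1_primrec : Primrec sub1 := by
  unfold sub1
  exact Primrec.ite ((mod5_pred 2).or (mod5_pred 4))
    (Primrec.fst.comp (Primrec.unpair.comp div5_primrec)) div5_primrec

lemma sub2_primrec : Primrec sub2 := by
  unfold sub2
  exact Primrec.ite ((mod5_pred 2).or (mod5_pred 4))
    (Primrec.snd.comp (Primrec.unpair.comp div5_primrec)) div5_primrec

lemma evBody_primrec :
    Primrec fun (x : (((ℕ × ℕ) × ℕ) × List Bool × List Bool) × ℕ) =>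
      evBody x.1.1.1.1 x.1.1.1.2 x.1.1.2 x.1.2.1 x.1.2.2 x.2 := by
  have hmm : Primrec fun (x : (((ℕ × ℕ) × ℕ) × List Bool × List Bool) × ℕ) => x.1.1.1.1 :=
    Primrec.fst.comp (Primrec.fst.comp (Primrec.fst.comp Primrec.fst))
  have hk : Primrec fun (x : (((ℕ × ℕ) × ℕ) × List Bool × List Bool) × ℕ) => x.1.1.1.2 :=
    Primrec.snd.comp (Primrec.fst.comp (Primrec.fst.comp Primrec.fst))
  have hn : Primrec fun (x : (((ℕ × ℕ) × ℕ) × List Bool × List Bool) × ℕ) => x.1.1.2 :=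
    Primrec.snd.comp (Primrec.fst.comp Primrec.fst)
  have hl1 : Primrec fun (x : (((ℕ × ℕ) × ℕ) × List Bool × List Bool) × ℕ) => x.1.2.1 :=
    Primrec.fst.comp (Primrec.snd.comp Primrec.fst)
  have hl2 : Primrec fun (x : (((ℕ × ℕ) × ℕ) × List Bool × List Bool) × ℕ) => x.1.2.2 :=
    Primrec.snd.comp (Primrec.snd.comp Primrec.fst)
  have ha : Primrec fun (x : (((ℕ × ℕ) × ℕ) × List Bool × List Bool) × ℕ) => x.2 :=
    Primrec.snd
  unfold evBody
  apply Primrec.ite ((mod5_pred 0).comp hn)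
  · exact bitB_primrec.comp hk
      (Primrec₂.natPair.comp (div5_primrec.comp hn) ha)
  apply Primrec.ite ((mod5_pred 1).comp hn)
  · exact Primrec.not.comp ((Primrec.list_getD false).comp hl1 ha)
  apply Primrec.ite ((mod5_pred 2).comp hn)
  · exact Primrec.and.comp ((Primrec.list_getD false).comp hl1 ha)
      ((Primrec.list_getD false).comp hl2 ha)
  apply Primrec.ite ((mod5_pred 3).comp hn)
  · exact (Primrec.list_getD false).comp hl1
      (Primrec.succ.comp ha)
  · exact sinceAux_primrec.comp
      (Primrec₂.pair.comp (Primrec₂.pair.comp hl1 hl2) ha)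
      (Primrec.succ.comp hmm)

lemma ev_primrec : Primrec₂ ev := by
  apply Primrec.nat_strong_rec ev
    (g := fun (p : ℕ × ℕ × ℕ) (prev : List (List Bool)) => some (evG p prev))
  · apply Primrec.option_some.comp₂
    apply Primrec₂.mk
    unfold evG
    apply Primrec.list_map
      (Primrec.list_range.comp (Primrec.snd.comp (Primrec.snd.comp Primrec.fst)))
    apply Primrec₂.mk
    have hprev : Primrec fun (p : ((ℕ × ℕ × ℕ) × List (List Bool)) × ℕ) => p.1.2 :=
      Primrec.snd.comp Primrec.fst
    have hn : Primrec fun (p : ((ℕ × ℕ × ℕ) × List (List Bool)) × ℕ) => p.1.2.length :=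
      Primrec.list_length.comp hprev
    have hmm : Primrec fun (p : ((ℕ × ℕ × ℕ) × List (List Bool)) × ℕ) => p.1.1.1 :=
      Primrec.fst.comp (Primrec.fst.comp Primrec.fst)
    have hk : Primrec fun (p : ((ℕ × ℕ × ℕ) × List (List Bool)) × ℕ) => p.1.1.2.1 :=
      Primrec.fst.comp (Primrec.snd.comp (Primrec.fst.comp Primrec.fst))
    have hl1 : Primrec fun (p : ((ℕ × ℕ × ℕ) × List (List Bool)) × ℕ) =>
        p.1.2.getD (sub1 p.1.2.length) [] :=
      (Primrec.list_getD []).comp hprev (sub1_primrec.comp hn)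
    have hl2 : Primrec fun (p : ((ℕ × ℕ × ℕ) × List (List Bool)) × ℕ) =>
        p.1.2.getD (sub2 p.1.2.length) [] :=
      (Primrec.list_getD []).comp hprev (sub2_primrec.comp hn)
    have hTuple : Primrec fun (p : ((ℕ × ℕ × ℕ) × List (List Bool)) × ℕ) =>
        ((((p.1.1.1, p.1.1.2.1), p.1.2.length),
          (p.1.2.getD (sub1 p.1.2.length) [], p.1.2.getD (sub2 p.1.2.length) [])), p.2) :=
      Primrec.pair (Primrec.pair (Primrec.pair (Primrec.pair hmm hk) hn)
        (Primrec.pair hl1 hl2)) Primrec.snd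
    exact (evBody_primrec.comp hTuple).of_eq fun p => rfl
  · intro p n
    rw [evG_spec]

/-- Check all codes `k < t`. -/
def chk (m n : ℕ) : ℕ → Bool
  | 0 => true
  | t + 1 => chk m n t && (ev (m, t, Lw m n) n).getD 0 false

lemma chk_iff (m n N : ℕ) :
    chk m n N = true ↔ ∀ k < N, (ev (m, k, Lw m n) n).getD 0 false = true := by
  induction N with
  | zero => simp [chk]
  | succ N ih =>
      simp only [chk, Bool.and_eq_true, ih]
      constructor
      · rintro ⟨h1, h2⟩ k hk
        rcases Nat.lt_succ_iff_lt_or_eq.mp hk with h | rfl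
        · exact h1 k h
        · exact h2
      · intro h
        exact ⟨fun k hk => h k (Nat.lt_succ_of_lt hk), h N (Nat.lt_succ_self N)⟩

lemma chk_eq (m n : ℕ) : ∀ N : ℕ,
    chk m n N = Nat.rec (motive := fun _ => Bool) true
      (fun t ih => ih && (ev (m, t, Lw m n) n).getD 0 false) N := by
  intro N
  induction N with
  | zero => rfl
  | succ N ih => simp only [chk, ih]

lemma Lw_primrec (m : ℕ) : Primrec (Lw m) := by
  unfold Lw
  exact Primrec.succ.comp (Primrec.nat_mul.comp (Primrec.const (m + 1))
    (Primrec.succ.comp Primrec.id))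

lemma chk_primrec (m : ℕ) : Primrec₂ (chk m) := by
  have h : Primrec₂ fun (n : ℕ) (p : ℕ × Bool) =>
      p.2 && (ev (m, p.1, Lw m n) n).getD 0 false := by
    apply Primrec.and.comp₂ (Primrec.snd.comp₂ Primrec₂.right)
    apply (Primrec.list_getD false).comp₂ ?_ (Primrec₂.const 0)
    apply ev_primrec.comp₂
    · exact Primrec₂.pair.comp₂ (Primrec₂.const m)
        (Primrec₂.pair.comp₂ (Primrec.fst.comp₂ Primrec₂.right)
          ((Lw_primrec m).comp₂ Primrec₂.left))
    · exact Primrec₂.left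
  exact (Primrec.nat_rec (Primrec.const true) h).of_eq fun n N => (chk_eq m n N).symm

lemma Bw_primrec (m : ℕ) : Primrec (Bw m) := by
  unfold Bw
  exact pow_primrec.comp
    (Primrec.succ.comp (Primrec.nat_add.comp Primrec.id (Lw_primrec m)))
    (Primrec.const 2)

/-- The decision function. -/
def fdec (m n : ℕ) : Bool := chk m n (2 ^ Bw m n)

lemma fdec_primrec (m : ℕ) : Primrec (fdec m) := by
  unfold fdec
  exact (chk_primrec m).comp Primrec.id
    (pow_primrec.comp (Primrec.const 2) (Bw_primrec m))

end LTLDec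

/-- the logic `LTL_{Past,m}` is decidable: membership is a
computable predicate on (codes of) formulas. -/
theorem logic_decidable (m : ℕ) (hm : 1 ≤ m) :
    ∃ f : ℕ → Bool, Computable f ∧
      ∀ φ : Formula, (φ ∈ Logic m ↔ f (encF φ) = true) := by
  refine ⟨LTLDec.fdec m, (LTLDec.fdec_primrec m).to_comp, fun φ => ?_⟩
  rw [LTLDec.main_iff m φ]
  unfold LTLDec.fdec
  rw [LTLDec.chk_iff]
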